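/- Let $s_c \in (0,1)$ and let $\lambda: [0,\infty) \to (0,\infty)$ be continuous. Suppose there exists $C>0$ such that for all $\tau_* > 0$, $\int_0^{\tau_*} (\tau_* - \tau)\, \lambda(\tau)^{-2(1-s_c)}\,d\tau \le C\, \tau_*^{1+s_c}$. Then there exists a constant $C' > 0$ and a sequence $\tau_n \to +\infty$ with $\lambda(\tau_n) \ge C' \sqrt{\tau_n}$ for all $n$; in particular $\limsup_{\tau\to\infty} \lambda(\tau)/\sqrt{\tau} > 0$ and $\lambda(\tau_n) \to \infty$. -/
import Mathlib


open Filter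

theorem length_scale_sequence (s_c : ℝ) (hsc : s_c ∈ Set.Ioo (0:ℝ) 1)
    (lam : ℝ → ℝ) (hcont : Continuous lam) (hpos : ∀ τ, 0 ≤ τ → 0 < lam τ)
    (C : ℝ) (hC : 0 < C)
    (hbound : ∀ τ_star > (0:ℝ),
      (∫ τ in (0:ℝ)..τ_star, (τ_star - τ) * (lam τ)^(-(2*(1 - s_c)))) ≤ C * τ_star^(1 + s_c)) :
    ∃ C' > (0:ℝ), ∃ τ : ℕ → ℝ,
      Tendsto τ atTop atTop ∧
      (∀ n, C' * Real.sqrt (τ n) ≤ lam (τ n)) ∧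
      Tendsto (fun n => lam (τ n)) atTop atTop := by
  obtain ⟨hs0, hs1⟩ := hsc
  set α : ℝ := 2 * (1 - s_c) with hα
  have hαpos : 0 < α := by simp only [hα]; nlinarith
  set C' : ℝ := (32*C) ^ (-(1/α)) with hC'def
  have h32C : (0:ℝ) < 32*C := by linarith
  have hC'pos : 0 < C' := Real.rpow_pos_of_pos h32C _
  -- key claim
  have key : ∀ T : ℝ, 1 ≤ T → ∃ t, t ∈ Set.Icc T (3/2*T) ∧ C' * Real.sqrt t ≤ lam t := by
    intro T hT
    by_contra h
    push_neg at h
    have hT0 : (0:ℝ) < T := by linarith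
    have h2T : (0:ℝ) < 2*T := by linarith
    -- the integrand
    set f : ℝ → ℝ := fun τ => (2*T - τ) * (lam τ) ^ (-α) with hf
    have hfc : ContinuousOn f (Set.Icc 0 (2*T)) := by
      apply ContinuousOn.mul (by fun_prop)
      apply ContinuousOn.rpow_const hcont.continuousOn
      intro x hx
      exact Or.inl (ne_of_gt (hpos x hx.1))
    have hfnonneg : ∀ x ∈ Set.Icc (0:ℝ) (2*T), 0 ≤ f x := by
      intro x hx
      have := hpos x hx.1
      have : (0:ℝ) ≤ (lam x) ^ (-α) := Real.rpow_nonneg this.le _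
      have h1 : (0:ℝ) ≤ 2*T - x := by linarith [hx.2]
      positivity
    have hsub1 : Set.uIcc (0:ℝ) T ⊆ Set.Icc 0 (2*T) := by
      rw [Set.uIcc_of_le hT0.le]; exact Set.Icc_subset_Icc le_rfl (by linarith)
    have hsub2 : Set.uIcc T (3/2*T) ⊆ Set.Icc 0 (2*T) := by
      rw [Set.uIcc_of_le (by linarith)]; exact Set.Icc_subset_Icc (by linarith) (by linarith)
    have hsub3 : Set.uIcc (3/2*T) (2*T) ⊆ Set.Icc 0 (2*T) := by
      rw [Set.uIcc_of_le (by linarith)]; exact Set.Icc_subset_Icc (by linarith) le_rfl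
    have hi1 : IntervalIntegrable f MeasureTheory.volume 0 T :=
      (hfc.mono hsub1).intervalIntegrable
    have hi2 : IntervalIntegrable f MeasureTheory.volume T (3/2*T) :=
      (hfc.mono hsub2).intervalIntegrable
    have hi3 : IntervalIntegrable f MeasureTheory.volume (3/2*T) (2*T) :=
      (hfc.mono hsub3).intervalIntegrable
    have hsplit : (∫ τ in (0:ℝ)..(2*T), f τ) =
        (∫ τ in (0:ℝ)..T, f τ) + (∫ τ in T..(3/2*T), f τ) + (∫ τ in (3/2*T)..(2*T), f τ) := by
      rw [← intervalIntegral.integral_add_adjacent_intervals (hi1.trans hi2) hi3,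
        ← intervalIntegral.integral_add_adjacent_intervals hi1 hi2]
    have hn1 : 0 ≤ ∫ τ in (0:ℝ)..T, f τ := by
      apply intervalIntegral.integral_nonneg hT0.le
      intro x hx; exact hfnonneg x (hsub1 (by rwa [Set.uIcc_of_le hT0.le]))
    have hn3 : 0 ≤ ∫ τ in (3/2*T)..(2*T), f τ := by
      apply intervalIntegral.integral_nonneg (by linarith)
      intro x hx; exact hfnonneg x (hsub3 (by rwa [Set.uIcc_of_le (by linarith)]))
    -- lower bound on middle integral
    set K : ℝ := (T/2) * (C' * Real.sqrt (2*T)) ^ (-α) with hK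
    have hKpt : ∀ x ∈ Set.Icc T (3/2*T), K ≤ f x := by
      intro x hx
      have hx0 : (0:ℝ) ≤ x := by linarith [hx.1]
      have hlx : 0 < lam x := hpos x hx0
      have hlt : lam x < C' * Real.sqrt x := h x ⟨hx.1, hx.2⟩
      have hsx : Real.sqrt x ≤ Real.sqrt (2*T) := Real.sqrt_le_sqrt (by linarith [hx.2])
      have h1 : (C' * Real.sqrt x) ^ (-α) ≤ (lam x) ^ (-α) :=
        Real.rpow_le_rpow_of_nonpos hlx hlt.le (by linarith)
      have hCx : 0 < C' * Real.sqrt x := lt_of_le_of_lt hlx.le hlt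
      have h2 : (C' * Real.sqrt (2*T)) ^ (-α) ≤ (C' * Real.sqrt x) ^ (-α) :=
        Real.rpow_le_rpow_of_nonpos hCx (by nlinarith) (by linarith)
      have h3 : T/2 ≤ 2*T - x := by linarith [hx.2]
      have h4 : (0:ℝ) ≤ (C' * Real.sqrt (2*T)) ^ (-α) := Real.rpow_nonneg (by positivity) _
      calc K = (T/2) * (C' * Real.sqrt (2*T)) ^ (-α) := rfl
        _ ≤ (2*T - x) * (lam x) ^ (-α) := by
            apply mul_le_mul h3 (le_trans h2 h1) h4 (by linarith)
    have hmid : K * (T/2) ≤ ∫ τ in T..(3/2*T), f τ := by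
      have := intervalIntegral.integral_mono_on (by linarith : T ≤ 3/2*T)
        (intervalIntegrable_const : IntervalIntegrable (fun _ => K) MeasureTheory.volume T (3/2*T))
        hi2 hKpt
      rwa [intervalIntegral.integral_const, smul_eq_mul, show (3/2*T - T) = T/2 by ring,
        mul_comm] at this
    -- the upper bound
    have hub := hbound (2*T) h2T
    have hub' : (∫ τ in (0:ℝ)..(2*T), f τ) ≤ C * (2*T)^(1+s_c) := hub
    -- algebra: compute (C' * sqrt (2T))^(-α)
    have hαne : α ≠ 0 := ne_of_gt hαpos
    have eC' : C' ^ (-α) = 32*C := by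
      rw [hC'def, ← Real.rpow_mul h32C.le, show -(1/α) * -α = 1 by field_simp,
        Real.rpow_one]
    have esqrt : (Real.sqrt (2*T)) ^ (-α) = (2*T) ^ (s_c - 1) := by
      rw [Real.sqrt_eq_rpow, ← Real.rpow_mul h2T.le]
      congr 1; rw [hα]; ring
    have emul : (C' * Real.sqrt (2*T)) ^ (-α) = 32*C * (2*T) ^ (s_c - 1) := by
      rw [Real.mul_rpow hC'pos.le (Real.sqrt_nonneg _), eC', esqrt]
    have epow : (2*T) ^ (1+s_c) = 4*T^2 * (2*T) ^ (s_c - 1) := by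
      rw [show (1+s_c) = 2 + (s_c - 1) by ring, Real.rpow_add h2T,
        show ((2:ℝ)) = ((2:ℕ):ℝ) by norm_num, Real.rpow_natCast]
      ring
    have hXpos : (0:ℝ) < (2*T) ^ (s_c - 1) := Real.rpow_pos_of_pos h2T _
    -- combine
    have hchain : K * (T/2) ≤ C * (2*T)^(1+s_c) := by
      calc K * (T/2) ≤ ∫ τ in T..(3/2*T), f τ := hmid
        _ ≤ (∫ τ in (0:ℝ)..T, f τ) + (∫ τ in T..(3/2*T), f τ)
            + (∫ τ in (3/2*T)..(2*T), f τ) := by linarith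
        _ = ∫ τ in (0:ℝ)..(2*T), f τ := hsplit.symm
        _ ≤ C * (2*T)^(1+s_c) := hub'
    rw [hK, emul, epow] at hchain
    nlinarith [hXpos, hC, hT0, mul_pos hXpos (mul_pos hC (mul_pos hT0 hT0))]
  -- construct the sequence
  choose t ht hlam using fun n : ℕ => key ((n:ℝ)+1) (by
    have : (0:ℝ) ≤ (n:ℝ) := Nat.cast_nonneg n
    linarith)
  have htlb : ∀ n : ℕ, (n:ℝ)+1 ≤ t n := fun n => (ht n).1
  refine ⟨C', hC'pos, t, ?_, hlam, ?_⟩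
  · exact tendsto_atTop_mono htlb
      (tendsto_atTop_add_const_right _ 1 tendsto_natCast_atTop_atTop)
  · have hlow : ∀ n : ℕ, C' * Real.sqrt ((n:ℝ)+1) ≤ lam (t n) := by
      intro n
      have h1 : Real.sqrt ((n:ℝ)+1) ≤ Real.sqrt (t n) := Real.sqrt_le_sqrt (htlb n)
      calc C' * Real.sqrt ((n:ℝ)+1) ≤ C' * Real.sqrt (t n) := by
            exact mul_le_mul_of_nonneg_left h1 hC'pos.le
        _ ≤ lam (t n) := hlam n
    apply tendsto_atTop_mono hlow
    apply Tendsto.const_mul_atTop hC'pos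
    have hs : Tendsto Real.sqrt atTop atTop := by
      apply (tendsto_rpow_atTop (by norm_num : (0:ℝ) < 1/2)).congr'
      filter_upwards [eventually_ge_atTop (0:ℝ)] with x hx
      exact (Real.sqrt_eq_rpow x).symm
    exact hs.comp (tendsto_atTop_add_const_right _ 1 tendsto_natCast_atTop_atTop)
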